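/- Let S be a finite set with |S| = k ≥ 3 and c ≥ 0 a real number. Then ρ_c is a t-monotone submodular function on 2^{S^±} and its base polyhedron B(ρ_c) equals B_c. -/

import Mathlib

open Finset

/-- Submodularity of a real-valued set function (with `ρ ∅ = 0`). -/
def SubmodularR {A : Type*} [DecidableEq A] (ρ : Finset A → ℝ) : Prop :=
  ρ ∅ = 0 ∧ ∀ X Y : Finset A, ρ (X ∩ Y) + ρ (X ∪ Y) ≤ ρ X + ρ Y

/-- `X̲`: remove from `X ⊆ S^±` all pairs `{i⁺, i⁻} ⊆ X`
(where `S^± = S × Bool`, `true` = `+`). -/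
def reduceSigned {S : Type*} [DecidableEq S] (X : Finset (S × Bool)) :
    Finset (S × Bool) :=
  X.filter (fun p => ¬((p.1, true) ∈ X ∧ (p.1, false) ∈ X))

/-- t-monotonicity: `ρ(X̲) ≤ ρ(X)` for all `X ⊆ S^±`. -/
def TMonoR {S : Type*} [DecidableEq S] (ρ : Finset (S × Bool) → ℝ) : Prop :=
  ∀ X : Finset (S × Bool), ρ (reduceSigned X) ≤ ρ X

/-- Membership in the base polyhedron `B(ρ)` of a real-valued set function. -/
def InBaseR {A : Type*} [Fintype A] (ρ : Finset A → ℝ) (x : A → ℝ) : Prop :=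
  (∑ p, x p) = ρ univ ∧ ∀ X : Finset A, (∑ p ∈ X, x p) ≤ ρ X

/-- The lift `B_c ⊆ ℝ^{S^±}` of the node-flowing polytope. -/
def liftedNodeFlowing (S : Type*) [Fintype S] [DecidableEq S] (c : ℝ) :
    Set (S × Bool → ℝ) :=
  {x | (∑ p : S × Bool, x p) = 0 ∧
    (∑ i : S, x (i, true)) ≤ 2 * c ∧
    (∀ i : S, x (i, true) + ∑ j ∈ univ.erase i, x (j, false) ≤ 0) ∧
    (∀ i : S, 0 ≤ x (i, true) ∧ x (i, true) ≤ c) ∧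
    (∀ i : S, -c ≤ x (i, false) ∧ x (i, false) ≤ 0)}

/-- The submodular function `ρ_c` describing `B_c`: with `a = |X⁺|`, `b = |X⁻|`,
`ρ_c(X) = 2c` for type 22 sets (`a ≥ 2`, `b ≤ k−2`), `ρ_c(X) = c` for types 21, 12 and 11
(the latter excluding type 11*, i.e. `X = {i⁺} ∪ (S⁻ ∖ {i⁻})`), and `ρ_c(X) = 0` otherwise. -/
noncomputable def rhoNF (S : Type*) [Fintype S] [DecidableEq S] (c : ℝ)
    (X : Finset (S × Bool)) : ℝ :=
  if 2 ≤ (X.filter (fun p => p.2 = true)).card ∧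
      (X.filter (fun p => p.2 = false)).card ≤ Fintype.card S - 2 then 2 * c
  else if (2 ≤ (X.filter (fun p => p.2 = true)).card ∧
        (X.filter (fun p => p.2 = false)).card = Fintype.card S - 1) ∨
      ((X.filter (fun p => p.2 = true)).card = 1 ∧
        (X.filter (fun p => p.2 = false)).card ≤ Fintype.card S - 2) ∨
      ((X.filter (fun p => p.2 = true)).card = 1 ∧
        (X.filter (fun p => p.2 = false)).card = Fintype.card S - 1 ∧
        ∃ i : S, (i, true) ∈ X ∧ (i, false) ∈ X) then c
  else 0

/-! Write `A = X⁺` and `C = S ∖ X⁻`, both as subsets of `S`. Then `ρ_c(X) = c · nodeRank A C`,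
where `nodeRank A C = min(|A|, |C|, 2)` except that `nodeRank {i} {i} = 0`. Intersection and
union of signed sets become `(A ∩ A', C ∪ C')` and `(A ∪ A', C ∩ C')`; since `|A|` and `|C|` are
modular along these operations, the truncated minimum is submodular, and the exceptional pairs
`({i}, {i})` are checked by hand. Removing matched pairs turns `(A, C)` into `(A ∩ C, A ∪ C)`,
which does not increase `nodeRank`. Finally, each defining inequality of `B_c` is
`x(X) ≤ ρ_c(X)` for a suitable `X`; conversely, on `B_c` the value `x(X)` is bounded by
`x(X⁺) ≤ min(c|A|, 2c)`, by `c|C|` using `x(S^±) = 0`, and by `0` on the exceptional sets,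
where it is a node constraint. -/

section SignedSets
variable {S : Type*} [Fintype S] [DecidableEq S]

def signNodes (b : Bool) (X : Finset (S × Bool)) : Finset S := univ.filter fun i => (i, b) ∈ X

def ofSignNodes (A B : Finset S) : Finset (S × Bool) := A ×ˢ {true} ∪ B ×ˢ {false}

@[simp] lemma mem_signNodes {b : Bool} {X : Finset (S × Bool)} {i : S} :
    i ∈ signNodes b X ↔ (i, b) ∈ X := by
  simp [signNodes]

@[simp] lemma signNodes_inter (b : Bool) (X Y : Finset (S × Bool)) :
    signNodes b (X ∩ Y) = signNodes b X ∩ signNodes b Y := by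
  ext; simp

@[simp] lemma signNodes_union (b : Bool) (X Y : Finset (S × Bool)) :
    signNodes b (X ∪ Y) = signNodes b X ∪ signNodes b Y := by
  ext; simp

@[simp] lemma signNodes_empty (b : Bool) : signNodes b (∅ : Finset (S × Bool)) = ∅ := by
  ext; simp

@[simp] lemma signNodes_univ (b : Bool) : signNodes b (univ : Finset (S × Bool)) = univ := by
  ext; simp

lemma signNodes_true_reduceSigned (X : Finset (S × Bool)) :
    signNodes true (reduceSigned X) = signNodes true X ∩ (signNodes false X)ᶜ := by
  ext; simp [reduceSigned]; tauto

lemma compl_signNodes_false_reduceSigned (X : Finset (S × Bool)) :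
    (signNodes false (reduceSigned X))ᶜ = signNodes true X ∪ (signNodes false X)ᶜ := by
  ext; simp [reduceSigned]; tauto

@[simp] lemma signNodes_true_ofSignNodes (A B : Finset S) :
    signNodes true (ofSignNodes A B) = A := by
  ext; simp [ofSignNodes]

@[simp] lemma signNodes_false_ofSignNodes (A B : Finset S) :
    signNodes false (ofSignNodes A B) = B := by
  ext; simp [ofSignNodes]

lemma sum_filter_snd_eq {M : Type*} [AddCommMonoid M] (X : Finset (S × Bool)) (b : Bool)
    (x : S × Bool → M) :
    ∑ p ∈ X.filter (fun p => p.2 = b), x p = ∑ i ∈ signNodes b X, x (i, b) := by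
  refine sum_nbij' Prod.fst (·, b) ?_ ?_ ?_ ?_ ?_ <;> simp +contextual

lemma card_filter_snd_eq (X : Finset (S × Bool)) (b : Bool) :
    #(X.filter (fun p => p.2 = b)) = #(signNodes b X) := by
  rw [card_eq_sum_ones, card_eq_sum_ones]
  exact sum_filter_snd_eq X b fun _ => 1

lemma sum_eq_sum_signNodes {M : Type*} [AddCommMonoid M] (X : Finset (S × Bool))
    (x : S × Bool → M) :
    ∑ p ∈ X, x p =
      ∑ i ∈ signNodes true X, x (i, true) + ∑ i ∈ signNodes false X, x (i, false) := by
  rw [← sum_filter_add_sum_filter_not X (fun p => p.2 = true)]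
  simp only [Bool.not_eq_true, sum_filter_snd_eq]

end SignedSets

section NodeRank
variable {S : Type*} [DecidableEq S]

def nodeRank (A C : Finset S) : ℕ := if A = C ∧ #A = 1 then 0 else min (min #A #C) 2

lemma nodeRank_le (A C : Finset S) : nodeRank A C ≤ min (min #A #C) 2 := by
  unfold nodeRank; split_ifs <;> omega

lemma nodeRank_eq_min {A C : Finset S} (h : ¬(A = C ∧ #A = 1)) :
    nodeRank A C = min (min #A #C) 2 :=
  if_neg h

@[simp] lemma nodeRank_empty_left (C : Finset S) : nodeRank ∅ C = 0 := by
  simpa using nodeRank_le ∅ C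

@[simp] lemma nodeRank_empty_right (A : Finset S) : nodeRank A ∅ = 0 := by
  simpa using nodeRank_le A ∅

@[simp] lemma nodeRank_singleton_self (i : S) : nodeRank {i} {i} = 0 := by
  simp [nodeRank]

lemma one_le_nodeRank {A C : Finset S} (hA : A.Nonempty) (hC : C.Nonempty) (hAC : A ≠ C) :
    1 ≤ nodeRank A C := by
  rw [nodeRank_eq_min (fun h => hAC h.1)]
  have := hA.card_pos
  have := hC.card_pos
  omega

lemma min_card_submodular (A A' C C' : Finset S) :
    min (min #(A ∩ A') #(C ∪ C')) 2 + min (min #(A ∪ A') #(C ∩ C')) 2 ≤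
      min (min #A #C) 2 + min (min #A' #C') 2 := by
  have hA := card_union_add_card_inter A A'
  have hC := card_union_add_card_inter C C'
  have := card_le_card (inter_subset_left : A ∩ A' ⊆ A)
  have := card_le_card (inter_subset_right : A ∩ A' ⊆ A')
  have := card_le_card (inter_subset_left : C ∩ C' ⊆ C)
  have := card_le_card (inter_subset_right : C ∩ C' ⊆ C')
  omega

lemma nodeRank_submodular_of_singleton (i : S) (A C : Finset S) :
    nodeRank ({i} ∩ A) ({i} ∪ C) + nodeRank ({i} ∪ A) ({i} ∩ C) ≤ nodeRank A C := by
  simp only [← insert_eq]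
  by_cases hiA : i ∈ A <;> by_cases hiC : i ∈ C
  · rw [singleton_inter_of_mem hiA, singleton_inter_of_mem hiC,
      insert_eq_of_mem hiA, insert_eq_of_mem hiC]
    rcases eq_singleton_or_nontrivial hiA with rfl | hA
    · simp
    rcases eq_singleton_or_nontrivial hiC with rfl | hC
    · simp
    rw [← one_lt_card_iff_nontrivial] at hA hC
    have := nodeRank_le {i} C
    have := nodeRank_le A {i}
    rw [nodeRank_eq_min (C := C) fun h => hA.ne' h.2]
    simp only [card_singleton] at *
    omega
  · rw [singleton_inter_of_mem hiA, singleton_inter_of_notMem hiC, nodeRank_empty_right,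
      add_zero]
    rcases C.eq_empty_or_nonempty with rfl | hC
    · simp
    have := nodeRank_le {i} (insert i C)
    have := one_le_nodeRank ⟨i, hiA⟩ hC (by rintro rfl; exact hiC hiA)
    simp only [card_singleton] at *
    omega
  · rw [singleton_inter_of_notMem hiA, singleton_inter_of_mem hiC, nodeRank_empty_left,
      zero_add]
    rcases A.eq_empty_or_nonempty with rfl | hA
    · simp
    have := nodeRank_le (insert i A) {i}
    have := one_le_nodeRank hA ⟨i, hiC⟩ (by rintro rfl; exact hiA hiC)
    simp only [card_singleton] at *
    omega
  · simp [singleton_inter_of_notMem hiA, singleton_inter_of_notMem hiC]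

lemma nodeRank_submodular (A A' C C' : Finset S) :
    nodeRank (A ∩ A') (C ∪ C') + nodeRank (A ∪ A') (C ∩ C') ≤
      nodeRank A C + nodeRank A' C' := by
  by_cases h : A = C ∧ #A = 1
  · obtain ⟨rfl, hA⟩ := h
    obtain ⟨i, rfl⟩ := card_eq_one.1 hA
    simpa using nodeRank_submodular_of_singleton i A' C'
  by_cases h' : A' = C' ∧ #A' = 1
  · obtain ⟨rfl, hA'⟩ := h'
    obtain ⟨i, rfl⟩ := card_eq_one.1 hA'
    rw [inter_comm, union_comm A, union_comm C, inter_comm C]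
    simpa using nodeRank_submodular_of_singleton i A C
  rw [nodeRank_eq_min h, nodeRank_eq_min h']
  have := min_card_submodular A A' C C'
  have := nodeRank_le (A ∩ A') (C ∪ C')
  have := nodeRank_le (A ∪ A') (C ∩ C')
  omega

lemma nodeRank_inter_union_le (A C : Finset S) : nodeRank (A ∩ C) (A ∪ C) ≤ nodeRank A C := by
  rcases eq_or_ne A C with rfl | hAC
  · simp
  rw [nodeRank_eq_min (fun h => hAC h.1)]
  have := nodeRank_le (A ∩ C) (A ∪ C)
  have := card_le_card (inter_subset_left : A ∩ C ⊆ A)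
  have := card_le_card (inter_subset_right : A ∩ C ⊆ C)
  omega

end NodeRank

section RhoNF
variable {S : Type*} [Fintype S] [DecidableEq S]

lemma nodeRank_eq_ite (hk : 2 ≤ Fintype.card S) (X : Finset (S × Bool)) :
    nodeRank (signNodes true X) (signNodes false X)ᶜ =
      if 2 ≤ #(signNodes true X) ∧ #(signNodes false X) ≤ Fintype.card S - 2 then 2
      else if (2 ≤ #(signNodes true X) ∧ #(signNodes false X) = Fintype.card S - 1) ∨
          (#(signNodes true X) = 1 ∧ #(signNodes false X) ≤ Fintype.card S - 2) ∨
          (#(signNodes true X) = 1 ∧ #(signNodes false X) = Fintype.card S - 1 ∧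
            ∃ i : S, (i, true) ∈ X ∧ (i, false) ∈ X) then 1
      else 0 := by
  set A := signNodes true X
  set B := signNodes false X
  have hB := card_le_univ B
  have hBc : #Bᶜ = Fintype.card S - #B := card_compl B
  have hsub : A ⊆ Bᶜ ↔ ¬∃ i : S, (i, true) ∈ X ∧ (i, false) ∈ X := by
    simp [A, B, subset_iff]
  unfold nodeRank
  by_cases hm : ∃ i : S, (i, true) ∈ X ∧ (i, false) ∈ X
  · rw [if_neg fun h => hsub.1 h.1.le hm]
    simp only [hm, and_true]
    split_ifs <;> omega
  · have hspecial : A = Bᶜ ∧ #A = 1 ↔ #A = 1 ∧ #B = Fintype.card S - 1 :=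
      ⟨fun ⟨hAB, hA⟩ => ⟨hA, by rw [← hAB] at hBc; omega⟩,
        fun ⟨hA, hB1⟩ => ⟨eq_of_subset_of_card_le (hsub.2 hm) (by omega), hA⟩⟩
    simp only [hspecial, hm, and_false, or_false]
    split_ifs <;> omega

lemma rhoNF_eq_nodeRank (hk : 2 ≤ Fintype.card S) (c : ℝ) (X : Finset (S × Bool)) :
    rhoNF S c X = c * nodeRank (signNodes true X) (signNodes false X)ᶜ := by
  rw [nodeRank_eq_ite hk, rhoNF, card_filter_snd_eq, card_filter_snd_eq]
  split_ifs <;> push_cast <;> ring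

lemma rhoNF_submodular (hk : 2 ≤ Fintype.card S) {c : ℝ} (hc : 0 ≤ c) :
    SubmodularR (rhoNF S c) := by
  refine ⟨by simp [rhoNF_eq_nodeRank hk], fun X Y => ?_⟩
  simp only [rhoNF_eq_nodeRank hk, signNodes_inter, signNodes_union, compl_inter, compl_union,
    ← mul_add]
  exact mul_le_mul_of_nonneg_left (mod_cast nodeRank_submodular _ _ _ _) hc

lemma rhoNF_tmono (hk : 2 ≤ Fintype.card S) {c : ℝ} (hc : 0 ≤ c) : TMonoR (rhoNF S c) := by
  intro X
  rw [rhoNF_eq_nodeRank hk, rhoNF_eq_nodeRank hk, signNodes_true_reduceSigned,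
    compl_signNodes_false_reduceSigned]
  exact mul_le_mul_of_nonneg_left (mod_cast nodeRank_inter_union_le _ _) hc

end RhoNF

section BasePolyhedron
variable {S : Type*} [Fintype S] [DecidableEq S]

lemma sum_true_add_sum_false (x : S × Bool → ℝ) :
    ∑ i, x (i, true) + ∑ i, x (i, false) = ∑ p, x p := by
  simp [sum_eq_sum_signNodes univ]

lemma inBaseR_rhoNF_iff (hk : 2 ≤ Fintype.card S) (c : ℝ) (x : S × Bool → ℝ) :
    InBaseR (rhoNF S c) x ↔ ∑ p, x p = 0 ∧
      ∀ A B : Finset S, ∑ i ∈ A, x (i, true) + ∑ i ∈ B, x (i, false) ≤ c * nodeRank A Bᶜ := by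
  simp only [InBaseR, rhoNF_eq_nodeRank hk, signNodes_univ, compl_univ, nodeRank_empty_right,
    Nat.cast_zero, mul_zero]
  refine and_congr_right fun _ => ⟨fun h A B => ?_, fun h X => ?_⟩
  · simpa [sum_eq_sum_signNodes] using h (ofSignNodes A B)
  · rw [sum_eq_sum_signNodes]
    exact h _ _

lemma sum_le_nodeRank_of_mem_liftedNodeFlowing {c : ℝ} (hc : 0 ≤ c) {x : S × Bool → ℝ}
    (hx : x ∈ liftedNodeFlowing S c) (A B : Finset S) :
    ∑ i ∈ A, x (i, true) + ∑ i ∈ B, x (i, false) ≤ c * nodeRank A Bᶜ := by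
  obtain ⟨h0, h2c, hnode, hpos, hneg⟩ := hx
  by_cases hspecial : A = Bᶜ ∧ #A = 1
  · obtain ⟨hAB, hA⟩ := hspecial
    obtain ⟨i, rfl⟩ := card_eq_one.1 hA
    rw [← hAB, nodeRank_singleton_self, ← compl_eq_comm.1 hAB.symm, compl_singleton]
    simpa using hnode i
  rw [nodeRank_eq_min hspecial]
  push_cast
  rw [mul_min_of_nonneg _ _ hc, mul_min_of_nonneg _ _ hc]
  have htot := sum_true_add_sum_false x
  have hsplit := sum_add_sum_compl B fun i => x (i, false)
  have hB : ∑ i ∈ B, x (i, false) ≤ 0 := sum_nonpos fun i _ => (hneg i).2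
  have hA_card : ∑ i ∈ A, x (i, true) ≤ #A • c := sum_le_card_nsmul _ _ _ fun i _ => (hpos i).2
  have hA_univ : ∑ i ∈ A, x (i, true) ≤ ∑ i, x (i, true) :=
    sum_le_sum_of_subset_of_nonneg (subset_univ A) fun i _ _ => (hpos i).1
  have hBc_card : #Bᶜ • (-c) ≤ ∑ i ∈ Bᶜ, x (i, false) :=
    card_nsmul_le_sum _ _ _ fun i _ => (hneg i).1
  rw [nsmul_eq_mul] at hA_card hBc_card
  refine le_min (le_min ?_ ?_) ?_ <;> linarith

lemma mem_liftedNodeFlowing_of_sum_le (hk : 2 ≤ Fintype.card S) {c : ℝ} {x : S × Bool → ℝ}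
    (h0 : ∑ p, x p = 0)
    (h : ∀ A B : Finset S, ∑ i ∈ A, x (i, true) + ∑ i ∈ B, x (i, false) ≤ c * nodeRank A Bᶜ) :
    x ∈ liftedNodeFlowing S c := by
  have htot := sum_true_add_sum_false x
  have hne (i : S) : ({i} : Finset S) ≠ univ := fun h => by
    have := congrArg card h
    rw [card_singleton, card_univ] at this
    omega
  have hrank_univ : nodeRank (univ : Finset S) univ = 2 := by
    rw [nodeRank_eq_min fun h => by rw [card_univ] at h; omega, card_univ]
    omega
  have hrank_singleton (i : S) : nodeRank {i} univ = 1 ∧ nodeRank univ {i} = 1 := by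
    rw [nodeRank_eq_min fun h => hne i h.1, nodeRank_eq_min fun h => hne i h.1.symm,
      card_singleton, card_univ]
    omega
  refine ⟨h0, ?_, fun i => ?_, fun i => ⟨?_, ?_⟩, fun i => ⟨?_, ?_⟩⟩
  · simpa [hrank_univ, mul_comm] using h univ ∅
  · simpa [← compl_singleton] using h {i} {i}ᶜ
  · have := h {i}ᶜ univ
    simp only [compl_univ, nodeRank_empty_right, Nat.cast_zero, mul_zero] at this
    linarith [Fintype.sum_eq_add_sum_compl i fun j => x (j, true)]
  · simpa [(hrank_singleton i).1] using h {i} ∅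
  · have := h univ {i}ᶜ
    simp only [compl_compl, (hrank_singleton i).2, Nat.cast_one, mul_one] at this
    linarith [Fintype.sum_eq_add_sum_compl i fun j => x (j, false)]
  · simpa using h ∅ {i}

end BasePolyhedron

/-- **`ρ_c` is a t-monotone submodular function with base polyhedron `B_c`.** -/
theorem rhoNF_tmono_submodular_base (S : Type*) [Fintype S] [DecidableEq S]
    (hk : 3 ≤ Fintype.card S) (c : ℝ) (hc : 0 ≤ c) :
    SubmodularR (rhoNF S c) ∧ TMonoR (rhoNF S c) ∧
      {x : S × Bool → ℝ | InBaseR (rhoNF S c) x} = liftedNodeFlowing S c := by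
  have hk2 : 2 ≤ Fintype.card S := by omega
  refine ⟨rhoNF_submodular hk2 hc, rhoNF_tmono hk2 hc,
    Set.ext fun x => (inBaseR_rhoNF_iff hk2 c x).trans ?_⟩
  refine ⟨fun ⟨h0, h⟩ => mem_liftedNodeFlowing_of_sum_le hk2 h0 h, fun hx => ⟨hx.1, ?_⟩⟩
  exact sum_le_nodeRank_of_mem_liftedNodeFlowing hc hx
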